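/- arXiv:2208.06720 — 6 statements merged into one kernel-verified Lean document; each statement's English description precedes it below -/
import Mathlib

section
/- Let f be convex on an interval I, let x⋆ ∈ I be a minimizer of f, and let x, y ∈ I with x⋆ ≤ x < y and |x − x⋆| ≤ 2·|y − x|. Then f(x) − f(x⋆) ≤ 2·(f(y) − f(x)). -/
/-- Bounding suboptimality of the nearest query point via the gap to the
second-nearest, using monotonicity of difference quotients. -/
theorem stmt2 (I : Set ℝ) (f : ℝ → ℝ) (hf : ConvexOn ℝ I f)
    (xstar x y : ℝ) (hxstar : xstar ∈ I) (hx : x ∈ I) (hy : y ∈ I)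
    (hmin : ∀ z ∈ I, f xstar ≤ f z)
    (h1 : xstar ≤ x) (h2 : x < y) (h3 : |x - xstar| ≤ 2 * |y - x|) :
    f x - f xstar ≤ 2 * (f y - f x) := by
  rw [abs_of_nonneg (by linarith), abs_of_nonneg (by linarith)] at h3
  rcases eq_or_lt_of_le h1 with rfl | h1
  · have := hmin y hy
    linarith
  · have hslope := hf.slope_mono_adjacent hxstar hy h1 h2
    have hfx : f xstar ≤ f x := hmin x hx
    have hs1 : 0 ≤ (f x - f xstar) / (x - xstar) := by
      apply div_nonneg <;> linarith
    have hs2 : 0 ≤ (f y - f x) / (y - x) := le_trans hs1 hslope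
    have key : f x - f xstar ≤ (x - xstar) * ((f y - f x) / (y - x)) := by
      rw [← div_le_iff₀' (by linarith)] at *
      exact hslope
    have : (x - xstar) * ((f y - f x) / (y - x)) ≤ 2 * (y - x) * ((f y - f x) / (y - x)) :=
      mul_le_mul_of_nonneg_right h3 hs2
    have hne : y - x ≠ 0 := by intro h; linarith [sub_eq_zero.mp h]
    have heq : 2 * (y - x) * ((f y - f x) / (y - x)) = 2 * (f y - f x) := by
      rw [show 2 * (y - x) * ((f y - f x) / (y - x)) = 2 * ((f y - f x) / (y - x) * (y - x)) by ring,
        div_mul_cancel₀ _ hne]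
    linarith
end

section
/- Let α > 0, c ≥ 0, and let B₁, …, Bₙ, D₁, …, Dₙ be positive reals and M > 0 such that for each i, Bᵢ ≤ 3M + 3·(2c)^{1/α}/Dᵢ^{1/α}, and such that Dₙ^{1/α} · ∑_{i=1}^n 1/Dᵢ^{1/α} ≤ 1/(1 − 2^{−1/α}). If S ≤ 4·∑_{i=1}^n Bᵢ and S ≥ 24·M·n, then Dₙ ≤ 4·(24/(2^{1/α} − 1))^α · c/S^α. -/
/-! Summing the bounds on `Bᵢ` and absorbing `4 · 3Mn ≤ S/2` gives
`S ≤ 24 (2c)^{1/α} ∑ Dᵢ^{-1/α}`. Multiplied by `Dₙ^{1/α}`, the chain condition bounds the right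
side by `24 (4c)^{1/α} / (2^{1/α} - 1)`; raising the resulting bound on `Dₙ^{1/α}` to the power `α`
gives the claim. -/

theorem Finset.sum_le_card_mul_add_mul_sum_one_div {ι : Type*} {s : Finset ι} {B g : ι → ℝ}
    {m k : ℝ} (h : ∀ i ∈ s, B i ≤ m + k / g i) :
    ∑ i ∈ s, B i ≤ s.card * m + k * ∑ i ∈ s, 1 / g i :=
  calc ∑ i ∈ s, B i ≤ ∑ i ∈ s, (m + k * (1 / g i)) := by
        simpa only [mul_one_div] using sum_le_sum h
    _ = s.card * m + k * ∑ i ∈ s, 1 / g i := by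
      rw [sum_add_distrib, sum_const, nsmul_eq_mul, mul_sum]

theorem Real.one_div_one_sub_rpow_neg {b r : ℝ} (hb : 1 < b) (hr : 0 < r) :
    1 / (1 - b ^ (-r)) = b ^ r / (b ^ r - 1) := by
  have hbr : 1 < b ^ r := one_lt_rpow hb hr
  rw [rpow_neg (by linarith)]
  field_simp

theorem Real.mul_rpow_one_div_div_rpow {k x S α : ℝ} (hk : 0 ≤ k) (hx : 0 ≤ x) (hS : 0 ≤ S)
    (hα : α ≠ 0) : (k * x ^ (1 / α) / S) ^ α = k ^ α * (x / S ^ α) := by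
  rw [mul_div_assoc, mul_rpow hk (by positivity), div_rpow (by positivity) hS,
    ← rpow_mul hx, one_div_mul_cancel hα, rpow_one]

theorem stmt5_general (α c M S : ℝ) (n : ℕ) (hn : 1 ≤ n)
    (hα : 0 < α) (hc : 0 ≤ c) (hS : 0 < S)
    (B D : ℕ → ℝ)
    (hD : ∀ i ∈ Finset.Icc 1 n, 0 < D i)
    (hbound : ∀ i ∈ Finset.Icc 1 n, B i ≤ 3 * M + 3 * (2 * c) ^ (1 / α) / (D i) ^ (1 / α))
    (hchain : (D n) ^ (1 / α) * ∑ i ∈ Finset.Icc 1 n, 1 / (D i) ^ (1 / α)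
        ≤ 1 / (1 - (2 : ℝ) ^ (-(1 / α))))
    (hS4 : S ≤ 4 * ∑ i ∈ Finset.Icc 1 n, B i) (hS24 : 24 * M * n ≤ S) :
    D n ≤ 4 * (24 / ((2 : ℝ) ^ (1 / α) - 1)) ^ α * (c / S ^ α) := by
  set r := 1 / α
  have hr : 0 < r := by positivity
  have h2r : 1 < (2 : ℝ) ^ r := Real.one_lt_rpow (by norm_num) hr
  have hDn : 0 < D n := hD n (Finset.mem_Icc.2 ⟨hn, le_rfl⟩)
  set T := ∑ i ∈ Finset.Icc 1 n, 1 / D i ^ r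
  have hST : S ≤ 24 * (2 * c) ^ r * T := by
    have := Finset.sum_le_card_mul_add_mul_sum_one_div hbound
    rw [Nat.card_Icc, Nat.add_sub_cancel] at this
    linarith
  have hDr : D n ^ r ≤ 24 / (2 ^ r - 1) * (4 * c) ^ r / S := by
    rw [Real.one_div_one_sub_rpow_neg one_lt_two hr] at hchain
    have h4c : (4 * c) ^ r = (2 * c) ^ r * 2 ^ r := by
      rw [← Real.mul_rpow (by positivity) zero_le_two]; ring_nf
    rw [le_div_iff₀ hS]
    calc D n ^ r * S ≤ 24 * (2 * c) ^ r * (D n ^ r * T) := by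
          have := Real.rpow_nonneg hDn.le r
          nlinarith
      _ ≤ 24 * (2 * c) ^ r * (2 ^ r / (2 ^ r - 1)) := by gcongr
      _ = 24 / (2 ^ r - 1) * (4 * c) ^ r := by rw [h4c]; ring
  calc D n ≤ (24 / (2 ^ r - 1) * (4 * c) ^ r / S) ^ α := by
        rwa [← Real.rpow_inv_le_iff_of_pos hDn.le (by positivity) hα, ← one_div]
    _ = 4 * (24 / (2 ^ r - 1)) ^ α * (c / S ^ α) := by
        rw [Real.mul_rpow_one_div_div_rpow (div_nonneg (by norm_num) (by linarith))
          (by positivity) hS.le hα.ne']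
        ring

/-- Arithmetic core of the chaining argument in the upper-bound proof. -/
theorem stmt5 (α c M S : ℝ) (n : ℕ) (hn : 1 ≤ n)
    (hα : 0 < α) (hc : 0 ≤ c) (hM : 0 < M) (hS : 0 < S)
    (B D : ℕ → ℝ)
    (hB : ∀ i ∈ Finset.Icc 1 n, 0 < B i) (hD : ∀ i ∈ Finset.Icc 1 n, 0 < D i)
    (hbound : ∀ i ∈ Finset.Icc 1 n, B i ≤ 3 * M + 3 * (2 * c) ^ (1 / α) / (D i) ^ (1 / α))
    (hchain : (D n) ^ (1 / α) * ∑ i ∈ Finset.Icc 1 n, 1 / (D i) ^ (1 / α)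
        ≤ 1 / (1 - (2 : ℝ) ^ (-(1 / α))))
    (hS4 : S ≤ 4 * ∑ i ∈ Finset.Icc 1 n, B i) (hS24 : 24 * M * n ≤ S) :
    D n ≤ 4 * (24 / ((2 : ℝ) ^ (1 / α) - 1)) ^ α * (c / S ^ α) :=
  stmt5_general α c M S n hn hα hc hS B D hD hbound hchain hS4 hS24
end

section
/- Let f be convex on [l, r] with l < c < r where c = (l+r)/2, and suppose f(l) ∈ [u_l, v_l], f(c) ∈ [u_c, v_c], f(r) ∈ [u_r, v_r] where each interval has length at most ε and the three intervals have a common point. Then for every x ∈ [l, r], f(x) ≥ min(u_l, u_c, u_r) − 4ε; consequently for each y ∈ {l, c, r}, f(y) − inf_{x∈[l,r]} f(x) ≤ 6ε. -/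
/-!
Write `c = (l + r) / 2`. If neither endpoint value exceeds `f c` by more than `δ`, then convexity
forces `f ≥ f c - δ` on all of `[l, r]`: for `x < c` the slope of `f` on `[x, c]` is at most its
slope on `[c, r]`, which is at most `δ / (r - c)`, and `c - x ≤ r - c` (symmetrically for `x > c`).
When the three confidence intervals share a point `t`, every endpoint value lies within `2ε` of
`f c`, and every value `f y` at a query point lies within `ε` of `t`, hence within `2ε` of
`min ul (min uc ur)`.
-/

open Set

section
variable {s : Set ℝ} {f : ℝ → ℝ} {x y z δ : ℝ}

theorem ConvexOn.sub_le_of_right_le_add (hf : ConvexOn ℝ s f) (hx : x ∈ s) (hz : z ∈ s)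
    (hxy : x < y) (hyz : y < z) (hgap : y - x ≤ z - y) (hδ : 0 ≤ δ) (hfz : f z ≤ f y + δ) :
    f y - δ ≤ f x := by
  have hslope := hf.slope_mono_adjacent hx hz hxy hyz
  rw [div_le_div_iff₀ (sub_pos.2 hxy) (sub_pos.2 hyz)] at hslope
  nlinarith [mul_le_mul_of_nonneg_left hgap hδ, sub_pos.2 hxy]

theorem ConvexOn.sub_le_of_left_le_add (hf : ConvexOn ℝ s f) (hx : x ∈ s) (hz : z ∈ s)
    (hxy : x < y) (hyz : y < z) (hgap : z - y ≤ y - x) (hδ : 0 ≤ δ) (hfx : f x ≤ f y + δ) :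
    f y - δ ≤ f z := by
  have hslope := hf.slope_mono_adjacent hx hz hxy hyz
  rw [div_le_div_iff₀ (sub_pos.2 hxy) (sub_pos.2 hyz)] at hslope
  nlinarith [mul_le_mul_of_nonneg_left hgap hδ, sub_pos.2 hyz]

end

theorem ConvexOn.midpoint_sub_le_of_endpoints_le {l r δ : ℝ} {f : ℝ → ℝ}
    (hf : ConvexOn ℝ (Icc l r) f) (hl : f l ≤ f ((l + r) / 2) + δ)
    (hr : f r ≤ f ((l + r) / 2) + δ) :
    ∀ x ∈ Icc l r, f ((l + r) / 2) - δ ≤ f x := by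
  intro x hx
  have hlr : l ≤ r := hx.1.trans hx.2
  have hlmem : l ∈ Icc l r := left_mem_Icc.2 hlr
  have hrmem : r ∈ Icc l r := right_mem_Icc.2 hlr
  have hmid : f ((l + r) / 2) ≤ (f l + f r) / 2 := by
    have h := hf.2 hlmem hrmem (by norm_num : (0 : ℝ) ≤ 1 / 2) (by norm_num : (0 : ℝ) ≤ 1 / 2)
      (by norm_num)
    simp only [smul_eq_mul] at h
    rw [show (l + r) / 2 = 1 / 2 * l + 1 / 2 * r by ring]
    linarith
  have hδ : 0 ≤ δ := by linarith
  rcases lt_trichotomy x ((l + r) / 2) with hxc | rfl | hcx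
  · exact hf.sub_le_of_right_le_add hx hrmem hxc (by linarith [hx.1]) (by linarith [hx.1]) hδ hr
  · linarith
  · exact hf.sub_le_of_left_le_add hlmem hx (by linarith [hx.2]) hcx (by linarith [hx.2]) hδ hl

theorem stmt11_general (l r : ℝ) (hlr : l < r) (c : ℝ) (hc : c = (l + r) / 2)
    (f : ℝ → ℝ) (hf : ConvexOn ℝ (Set.Icc l r) f) (ε : ℝ)
    (ul vl uc vc ur vr : ℝ)
    (hfl : f l ∈ Set.Icc ul vl) (hfc : f c ∈ Set.Icc uc vc) (hfr : f r ∈ Set.Icc ur vr)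
    (hlenl : vl - ul ≤ ε) (hlenc : vc - uc ≤ ε) (hlenr : vr - ur ≤ ε)
    (hint : (Set.Icc ul vl ∩ Set.Icc uc vc ∩ Set.Icc ur vr).Nonempty) :
    (∀ x ∈ Set.Icc l r, min ul (min uc ur) - 4 * ε ≤ f x) ∧
    (∀ y ∈ ({l, c, r} : Set ℝ), f y - sInf (f '' Set.Icc l r) ≤ 6 * ε) := by
  obtain ⟨t, ⟨⟨htl, htl'⟩, htc, htc'⟩, htr, htr'⟩ := hint
  have hmin : t - ε ≤ min ul (min uc ur) := by
    simp only [le_min_iff]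
    exact ⟨by linarith [hfl.1, hfl.2], by linarith [hfc.1, hfc.2], by linarith [hfr.1, hfr.2]⟩
  have hlower : ∀ x ∈ Icc l r, min ul (min uc ur) - 4 * ε ≤ f x := by
    subst hc
    intro x hx
    have hfar := hf.midpoint_sub_le_of_endpoints_le (δ := 2 * ε)
      (by linarith [hfl.2, hfc.1]) (by linarith [hfr.2, hfc.1]) x hx
    linarith [(min_le_right ul _).trans (min_le_left uc ur), hfc.1]
  have hInf : min ul (min uc ur) - 4 * ε ≤ sInf (f '' Icc l r) :=
    le_csInf ((nonempty_Icc.2 hlr.le).image f) (forall_mem_image.2 hlower)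
  refine ⟨hlower, ?_⟩
  rintro y (rfl | rfl | rfl)
  · linarith [hfl.2]
  · linarith [hfc.2]
  · linarith [hfr.2]

/-- All three query points are `6ε`-near-optimal when the confidence intervals overlap. -/
theorem stmt11 (l r : ℝ) (hlr : l < r) (c : ℝ) (hc : c = (l + r) / 2)
    (f : ℝ → ℝ) (hf : ConvexOn ℝ (Set.Icc l r) f) (ε : ℝ) (hε : 0 ≤ ε)
    (ul vl uc vc ur vr : ℝ)
    (hfl : f l ∈ Set.Icc ul vl) (hfc : f c ∈ Set.Icc uc vc) (hfr : f r ∈ Set.Icc ur vr)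
    (hlenl : vl - ul ≤ ε) (hlenc : vc - uc ≤ ε) (hlenr : vr - ur ≤ ε)
    (hint : (Set.Icc ul vl ∩ Set.Icc uc vc ∩ Set.Icc ur vr).Nonempty) :
    (∀ x ∈ Set.Icc l r, min ul (min uc ur) - 4 * ε ≤ f x) ∧
    (∀ y ∈ ({l, c, r} : Set ℝ), f y - sInf (f '' Set.Icc l r) ≤ 6 * ε) :=
  stmt11_general l r hlr c hc f hf ε ul vl uc vc ur vr hfl hfc hfr hlenl hlenc hlenr hint
end

section
/- Suppose n points x₁, …, x₃ ∈ ℝ receive nonnegative budget increments over times 1..T where at each time t the increment b_t > 0 is added to a point with the currently smallest accumulated budget among the three. Then at any time t, the minimum accumulated budget among the three points is at least (S_t − 2·max_{s≤t} b_s)/3, where S_t = ∑_{s=1}^t b_s. -/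
/-!
Under the greedy rule any two counters differ by at most the largest increment `M` so far: a
counter only grows while it is a minimum, so right after growing it exceeds every other counter
by at most the increment it received. Summing `B_i ≤ B_j + M` over the `n` counters gives
`S_t ≤ n B_j + (n - 1) M`, which for `n = 3` is the claim.
-/

open Finset

variable {ι : Type*} [DecidableEq ι]

def load (X : ℕ → ι) (b : ℕ → ℝ) (j : ι) (t : ℕ) : ℝ :=
  ∑ s ∈ Icc 1 t, if X s = j then b s else 0

lemma sum_le_card_mul_add_of_le_add [Fintype ι] {x : ι → ℝ} {m : ℝ} (j : ι)
    (h : ∀ i, x i ≤ x j + m) :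
    ∑ i, x i ≤ Fintype.card ι * x j + (Fintype.card ι - 1) * m := by
  have hcard : 1 ≤ Fintype.card ι := Fintype.card_pos_iff.2 ⟨j⟩
  have hrest := sum_le_card_nsmul (univ.erase j) x (x j + m) fun i _ => h i
  rw [card_erase_of_mem (mem_univ j), card_univ, nsmul_eq_mul, Nat.cast_sub hcard,
    Nat.cast_one] at hrest
  rw [← add_sum_erase _ _ (mem_univ j)]
  linarith

section Load

variable {X : ℕ → ι} {b : ℕ → ℝ}

@[simp] lemma load_zero (j : ι) : load X b j 0 = 0 := by
  simp [load]

lemma load_succ (j : ι) (t : ℕ) :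
    load X b j (t + 1) = load X b j t + if X (t + 1) = j then b (t + 1) else 0 :=
  sum_Icc_succ_top (by omega) _

lemma sum_load [Fintype ι] (t : ℕ) : ∑ j, load X b j t = ∑ s ∈ Icc 1 t, b s := by
  unfold load
  rw [sum_comm]
  simp

lemma load_le_load_add {m : ℝ} (hm : 0 ≤ m) {u : ℕ}
    (hb : ∀ s, 1 ≤ s → s ≤ u → 0 ≤ b s) (hbm : ∀ s, 1 ≤ s → s ≤ u → b s ≤ m)
    (hgreedy : ∀ s, 1 ≤ s → s ≤ u → ∀ k, load X b (X s) (s - 1) ≤ load X b k (s - 1))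
    (i k : ι) : load X b i u ≤ load X b k u + m := by
  induction u with
  | zero => simpa using hm
  | succ u ih =>
    have hb_last := hb (u + 1) (by omega) le_rfl
    have hbm_last := hbm (u + 1) (by omega) le_rfl
    have hk : load X b k u ≤ load X b k (u + 1) := by
      rw [load_succ]
      split_ifs <;> linarith
    rw [load_succ]
    split_ifs with hi
    · have hmin := hgreedy (u + 1) (by omega) le_rfl k
      rw [hi, add_tsub_cancel_right] at hmin
      linarith
    · have hprev := ih (fun s h1 h2 => hb s h1 (by omega)) (fun s h1 h2 => hbm s h1 (by omega))
        (fun s h1 h2 => hgreedy s h1 (by omega))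
      linarith

theorem sum_sub_le_card_mul_load [Fintype ι] {m : ℝ} (hm : 0 ≤ m) {t : ℕ}
    (hb : ∀ s, 1 ≤ s → s ≤ t → 0 ≤ b s) (hbm : ∀ s, 1 ≤ s → s ≤ t → b s ≤ m)
    (hgreedy : ∀ s, 1 ≤ s → s ≤ t → ∀ k, load X b (X s) (s - 1) ≤ load X b k (s - 1))
    (j : ι) :
    ∑ s ∈ Icc 1 t, b s - (Fintype.card ι - 1) * m ≤ Fintype.card ι * load X b j t := by
  have hsum := sum_le_card_mul_add_of_le_add j fun i => load_le_load_add hm hb hbm hgreedy i j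
  rw [sum_load] at hsum
  linarith

end Load

/-- Equipartition inequality (eq:equipartition) with `k = 0`: greedy minimum-budget
allocation among three points keeps every accumulated budget at least
`(S_t - 2·max_{s≤t} b_s)/3`. -/
theorem stmt12 (T : ℕ) (b : ℕ → ℝ) (hb : ∀ s, 1 ≤ s → s ≤ T → 0 < b s)
    (X : ℕ → Fin 3) (B : Fin 3 → ℕ → ℝ)
    (hB : ∀ j t, B j t = ∑ s ∈ Finset.Icc 1 t, if X s = j then b s else 0)
    (hgreedy : ∀ t, 1 ≤ t → t ≤ T → ∀ j, B (X t) (t - 1) ≤ B j (t - 1))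
    (t : ℕ) (ht1 : 1 ≤ t) (htT : t ≤ T) (j : Fin 3) :
    ((∑ s ∈ Finset.Icc 1 t, b s)
        - 2 * (Finset.Icc 1 t).sup' (Finset.nonempty_Icc.2 ht1) b) / 3 ≤ B j t := by
  obtain rfl : B = load X b := funext fun j => funext (hB j)
  set M := (Icc 1 t).sup' (nonempty_Icc.2 ht1) b
  have hbM : ∀ s, 1 ≤ s → s ≤ t → b s ≤ M := fun s h1 h2 => le_sup' b (mem_Icc.2 ⟨h1, h2⟩)
  have hM : 0 ≤ M := (hb t ht1 htT).le.trans (hbM t ht1 le_rfl)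
  have key := sum_sub_le_card_mul_load hM (fun s h1 h2 => (hb s h1 (h2.trans htT)).le) hbM
    (fun s h1 h2 => hgreedy s h1 (h2.trans htT)) j
  norm_num at key
  rw [div_le_iff₀ three_pos]
  linarith
end

section
/- Under the greedy minimum-budget allocation to three counters (each step's budget b_t added to a counter with smallest current total), for every k ∈ {0, …, T}, the minimum counter value after step T − k is at least (S − (2 + k)·max_t b_t)/3, where S = ∑_{t=1}^T b_t. -/
/-!
Greedy allocation keeps the counters within `M = max_t b_t` of each other: the counter that
receives `b_t` was a minimum just before, so afterwards it exceeds every other counter by at most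
`b_t`. As the counters after step `t` add up to the partial sum `S_t`, the smallest of `n`
counters is at least `(S_t - (n - 1) M) / n`, and `S_{T-k} ≥ S - k M`.
-/

open Finset

section Counters

variable {ι : Type*} [DecidableEq ι] (b : ℕ → ℝ) (X : ℕ → ι)

def counter (j : ι) (t : ℕ) : ℝ :=
  ∑ s ∈ Icc 1 t, if X s = j then b s else 0

@[simp]
theorem counter_zero (j : ι) : counter b X j 0 = 0 := by
  simp [counter]

theorem counter_succ (j : ι) (t : ℕ) :
    counter b X j (t + 1) = counter b X j t + if X (t + 1) = j then b (t + 1) else 0 := by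
  rw [counter, counter, sum_Icc_succ_top (by omega)]

theorem sum_counter [Fintype ι] (t : ℕ) : ∑ j, counter b X j t = ∑ s ∈ Icc 1 t, b s := by
  simp only [counter]
  rw [Finset.sum_comm]
  refine sum_congr rfl fun s _ => ?_
  simp

theorem counter_le_counter_add_of_greedy {T : ℕ} {M : ℝ} (hM : 0 ≤ M)
    (hb : ∀ s ∈ Icc 1 T, 0 ≤ b s) (hbM : ∀ s ∈ Icc 1 T, b s ≤ M)
    (hgreedy : ∀ t ∈ Icc 1 T, ∀ j, counter b X (X t) (t - 1) ≤ counter b X j (t - 1)) :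
    ∀ t ≤ T, ∀ i j, counter b X i t ≤ counter b X j t + M := by
  intro t
  induction t with
  | zero => intro _ i j; simpa using hM
  | succ t ih =>
    intro ht i j
    have hs : t + 1 ∈ Icc 1 T := mem_Icc.2 ⟨by omega, ht⟩
    have hj : counter b X j t ≤ counter b X j (t + 1) := by
      rw [counter_succ]
      split_ifs
      exacts [le_add_of_nonneg_right (hb _ hs), (add_zero _).ge]
    by_cases hi : X (t + 1) = i
    · have hmin := hgreedy _ hs j
      rw [hi, Nat.add_sub_cancel] at hmin
      rw [counter_succ, if_pos hi]
      linarith [hbM _ hs]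
    · rw [counter_succ, if_neg hi, add_zero]
      linarith [ih (by omega) i j]

end Counters

theorem sum_le_card_mul_add {ι : Type*} [Fintype ι] [DecidableEq ι] {f : ι → ℝ} {M : ℝ}
    (j : ι) (hf : ∀ i, f i ≤ f j + M) :
    ∑ i, f i ≤ Fintype.card ι * f j + (Fintype.card ι - 1) * M := by
  have hrest : ∑ i ∈ univ.erase j, (f i - f j) ≤ (Fintype.card ι - 1) * M := by
    calc ∑ i ∈ univ.erase j, (f i - f j) ≤ ∑ _i ∈ univ.erase j, M :=
          sum_le_sum fun i _ => by linarith [hf i]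
      _ = (Fintype.card ι - 1) * M := by
          rw [sum_const, nsmul_eq_mul, cast_card_erase_of_mem (mem_univ j), card_univ]
  have hsplit : ∑ i, (f i - f j) = ∑ i ∈ univ.erase j, (f i - f j) :=
    (sum_erase univ (f := fun i => f i - f j) (sub_self (f j))).symm
  rw [sum_sub_distrib, sum_const, card_univ, nsmul_eq_mul] at hsplit
  linarith

theorem sum_Icc_le_sum_Icc_sub_add {b : ℕ → ℝ} {T : ℕ} {M : ℝ} (hM : 0 ≤ M)
    (hbM : ∀ s ∈ Icc 1 T, b s ≤ M) (k : ℕ) :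
    ∑ s ∈ Icc 1 T, b s ≤ ∑ s ∈ Icc 1 (T - k), b s + k * M := by
  have htail : ∑ s ∈ Ioc (T - k) T, b s ≤ k * M := by
    calc ∑ s ∈ Ioc (T - k) T, b s ≤ #(Ioc (T - k) T) • M :=
          sum_le_card_nsmul _ _ _ fun s hs =>
            hbM s (mem_Icc.2 ⟨Nat.one_le_of_lt (mem_Ioc.1 hs).1, (mem_Ioc.1 hs).2⟩)
      _ ≤ k * M := by
          rw [nsmul_eq_mul, Nat.card_Ioc]
          gcongr
          exact_mod_cast (by omega : T - (T - k) ≤ k)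
  have hIcc (n : ℕ) : Icc 1 n = Ioc 0 n := Icc_add_one_left_eq_Ioc 0 n
  rw [hIcc, hIcc, ← sum_Ioc_consecutive b (Nat.zero_le _) (Nat.sub_le T k)]
  linarith

theorem stmt13_general (T : ℕ) (hT : 1 ≤ T) (b : ℕ → ℝ) (hb : ∀ s, 1 ≤ s → s ≤ T → 0 < b s)
    (X : ℕ → Fin 3) (B : Fin 3 → ℕ → ℝ)
    (hB : ∀ j t, B j t = ∑ s ∈ Finset.Icc 1 t, if X s = j then b s else 0)
    (hgreedy : ∀ t, 1 ≤ t → t ≤ T → ∀ j, B (X t) (t - 1) ≤ B j (t - 1))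
    (k : ℕ) (j : Fin 3) :
    ((∑ s ∈ Finset.Icc 1 T, b s)
        - (2 + (k : ℝ)) * (Finset.Icc 1 T).sup' (Finset.nonempty_Icc.2 hT) b) / 3
      ≤ B j (T - k) := by
  set M := (Icc 1 T).sup' (nonempty_Icc.2 hT) b
  obtain rfl : B = counter b X := funext₂ hB
  have hbM : ∀ s ∈ Icc 1 T, b s ≤ M := fun s hs => le_sup' b hs
  have hb0 : ∀ s ∈ Icc 1 T, 0 ≤ b s := fun s hs => (hb s (mem_Icc.1 hs).1 (mem_Icc.1 hs).2).le
  have hM : 0 ≤ M := (hb0 1 (mem_Icc.2 ⟨le_rfl, hT⟩)).trans (hbM 1 (mem_Icc.2 ⟨le_rfl, hT⟩))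
  have hspread := counter_le_counter_add_of_greedy b X hM hb0 hbM
    fun t ht => hgreedy t (mem_Icc.1 ht).1 (mem_Icc.1 ht).2
  have hmin := sum_le_card_mul_add j (hspread (T - k) (Nat.sub_le T k) · j)
  rw [sum_counter, Fintype.card_fin] at hmin
  have htail := sum_Icc_le_sum_Icc_sub_add hM hbM k
  norm_num at hmin
  rw [div_le_iff₀ three_pos]
  linarith

/-- Full equipartition inequality (eq:equipartition): for every `k ∈ {0,…,T}`, the minimum
counter value after step `T - k` is at least `(S - (2 + k)·max_t b_t)/3`. -/
theorem stmt13 (T : ℕ) (hT : 1 ≤ T) (b : ℕ → ℝ) (hb : ∀ s, 1 ≤ s → s ≤ T → 0 < b s)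
    (X : ℕ → Fin 3) (B : Fin 3 → ℕ → ℝ)
    (hB : ∀ j t, B j t = ∑ s ∈ Finset.Icc 1 t, if X s = j then b s else 0)
    (hgreedy : ∀ t, 1 ≤ t → t ≤ T → ∀ j, B (X t) (t - 1) ≤ B j (t - 1))
    (k : ℕ) (hk : k ≤ T) (j : Fin 3) :
    ((∑ s ∈ Finset.Icc 1 T, b s)
        - (2 + (k : ℝ)) * (Finset.Icc 1 T).sup' (Finset.nonempty_Icc.2 hT) b) / 3
      ≤ B j (T - k) :=
  stmt13_general T hT b hb X B hB hgreedy k j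
end

section
/- Fix α > 0, c ≥ 0, B > 0, T ∈ ℕ with T ≥ 1, and a nondegenerate bounded interval I. Set b_t = B/T for all t and K = c/(2B^α). For any deterministic sequence of query points X₁, …, X_T ∈ I and recommendation R_T ∈ I produced as a function of the fuzzy evaluations J_t = [f(X_t) − c/(2𝔅_t^α), f(X_t) + c/(2𝔅_t^α)] (where 𝔅_t = ∑_{s≤t} b_s·1{X_s = X_t}), with the two alternatives f± as in the lower-bound construction, the evaluations J_t are identical for f₊ and f₋, and hence there exists f ∈ {f₊, f₋} with f(R_T) − inf_I f ≥ c/(2B^α) ≥ (1/4)·c/(∑_t b_t)^α. -/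
/-!
The two alternatives `f₊ = ramp · K` and `f₋ = -ramp · K` are bounded by `K = c/(2B^α)` in
absolute value on `I`, and every fuzzy radius `c/(2𝔅_t^α)` is at least `K` because `𝔅_t ≤ B`;
so the answer interval centred at `0` is consistent with both, and the oracle reveals nothing.
Since `f₋ = -f₊`, one of them is nonnegative at the recommendation `R`, while both have
infimum `-K` on `I` (attained at an endpoint); that one has error at least `K`.
-/

open Set Finset

noncomputable def ramp (lo hi x : ℝ) : ℝ := 1 - 2 * (x - lo) / (hi - lo)

/-- The paper's `𝔅_t` for the uniform budget allocation `b_s = B / T`. -/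
noncomputable def budget (B : ℝ) (T : ℕ) (X : ℕ → ℝ) (t : ℕ) : ℝ :=
  ∑ s ∈ Icc 1 t, if X s = X t then B / T else 0

section Ramp

variable {lo hi : ℝ}

lemma ramp_left : ramp lo hi lo = 1 := by
  simp [ramp]

lemma ramp_right (hI : lo < hi) : ramp lo hi hi = -1 := by
  rw [ramp, mul_div_assoc, div_self (sub_pos.2 hI).ne']
  norm_num

lemma abs_ramp_le_one (hI : lo < hi) {x : ℝ} (hx : x ∈ Icc lo hi) : |ramp lo hi x| ≤ 1 := by
  have hlen : 0 < hi - lo := sub_pos.2 hI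
  have h0 : 0 ≤ 2 * (x - lo) / (hi - lo) := div_nonneg (by linarith [hx.1]) hlen.le
  have h2 : 2 * (x - lo) / (hi - lo) ≤ 2 := by
    rw [div_le_iff₀ hlen]
    linarith [hx.2]
  rw [ramp, abs_le]
  constructor <;> linarith

lemma abs_ramp_mul_le (hI : lo < hi) {x K : ℝ} (hx : x ∈ Icc lo hi) (hK : 0 ≤ K) :
    |ramp lo hi x * K| ≤ K := by
  rw [abs_mul, abs_of_nonneg hK]
  exact mul_le_of_le_one_left hK (abs_ramp_le_one hI hx)

end Ramp

section Budget

variable {B : ℝ} {T t : ℕ} {X : ℕ → ℝ}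

lemma budget_pos (hB : 0 < B) (ht : 1 ≤ t) (htT : t ≤ T) : 0 < budget B T X t := by
  have hT : (0 : ℝ) < T := by exact_mod_cast ht.trans htT
  calc (0 : ℝ) < B / T := div_pos hB hT
    _ = if X t = X t then B / T else 0 := (if_pos rfl).symm
    _ ≤ budget B T X t :=
      single_le_sum (f := fun s => if X s = X t then B / T else 0)
        (fun s _ => by split_ifs <;> positivity) (Finset.mem_Icc.2 ⟨ht, le_rfl⟩)

lemma budget_le (hB : 0 ≤ B) (htT : t ≤ T) : budget B T X t ≤ B := by
  calc budget B T X t ≤ (Finset.Icc 1 t).card • (B / T) :=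
        sum_le_card_nsmul _ _ _ fun s _ => by split_ifs <;> first | exact le_rfl | positivity
    _ = t * (B / T) := by simp
    _ ≤ T * (B / T) := by gcongr
    _ ≤ B := by
        rcases Nat.eq_zero_or_pos T with rfl | hT
        · simpa using hB
        · rw [mul_div_cancel₀ _ (by positivity)]

end Budget

lemma div_two_mul_rpow_le {α c b B : ℝ} (hα : 0 ≤ α) (hc : 0 ≤ c) (hb : 0 < b) (hbB : b ≤ B) :
    c / (2 * B ^ α) ≤ c / (2 * b ^ α) := by
  have hbα : 0 < b ^ α := Real.rpow_pos_of_pos hb α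
  gcongr

lemma quarter_div_sum_rpow_le {α c B : ℝ} (hα : 0 < α) (hc : 0 ≤ c) (hB : 0 < B) (T : ℕ) :
    1 / 4 * (c / (∑ _t ∈ Icc 1 T, B / T) ^ α) ≤ c / (2 * B ^ α) := by
  rcases Nat.eq_zero_or_pos T with rfl | hT
  · simp [Real.zero_rpow hα.ne']
    positivity
  · have hsum : ∑ _t ∈ Icc 1 T, B / T = B := by
      rw [sum_const, Nat.card_Icc, Nat.add_sub_cancel, nsmul_eq_mul,
        mul_div_cancel₀ _ (by positivity)]
    have hd : 0 ≤ c / B ^ α := by positivity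
    rw [hsum, mul_comm (2 : ℝ), ← div_div]
    linarith

lemma le_sub_csInf_image {f : ℝ → ℝ} {S : Set ℝ} {K R a : ℝ} (hlow : ∀ x ∈ S, -K ≤ f x)
    (ha : a ∈ S) (hfa : f a = -K) (hR : 0 ≤ f R) : K ≤ f R - sInf (f '' S) := by
  have hleast : IsLeast (f '' S) (-K) :=
    ⟨⟨a, ha, hfa⟩, by rintro _ ⟨x, hx, rfl⟩; exact hlow x hx⟩
  rw [hleast.csInf_eq]
  linarith

lemma exists_ramp_le_sub_csInf {lo hi K : ℝ} (R : ℝ) (hI : lo < hi) (hK : 0 ≤ K) :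
    ∃ f ∈ ({fun x => ramp lo hi x * K, fun x => -ramp lo hi x * K} : Set (ℝ → ℝ)),
      K ≤ f R - sInf (f '' Icc lo hi) := by
  have hlow : ∀ x ∈ Icc lo hi, -K ≤ ramp lo hi x * K ∧ -K ≤ -ramp lo hi x * K := by
    intro x hx
    have h := abs_le.1 (abs_ramp_mul_le hI hx hK)
    constructor <;> linarith [h.1, h.2]
  rcases le_total 0 (ramp lo hi R) with hR0 | hR0
  · refine ⟨_, Or.inl rfl, le_sub_csInf_image (fun x hx => (hlow x hx).1)
      (right_mem_Icc.2 hI.le) ?_ (mul_nonneg hR0 hK)⟩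
    simp [ramp_right hI]
  · refine ⟨_, Or.inr rfl, le_sub_csInf_image (fun x hx => (hlow x hx).2)
      (left_mem_Icc.2 hI.le) ?_ (mul_nonneg (neg_nonneg.2 hR0) hK)⟩
    simp [ramp_left]

theorem stmt19_general (α c B : ℝ) (hα : 0 < α) (hc : 0 ≤ c) (hB : 0 < B)
    (T : ℕ) (lo hi : ℝ) (hI : lo < hi)
    (X : ℕ → ℝ) (hX : ∀ t, 1 ≤ t → t ≤ T → X t ∈ Set.Icc lo hi)
    (R : ℝ)
    (fp fm : ℝ → ℝ)
    (hfp : ∀ x, fp x = (1 - 2 * (x - lo) / (hi - lo)) * (c / (2 * B ^ α)))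
    (hfm : ∀ x, fm x = -(1 - 2 * (x - lo) / (hi - lo)) * (c / (2 * B ^ α)))
    (Bud : ℕ → ℝ)
    (hBud : ∀ t, Bud t = ∑ s ∈ Finset.Icc 1 t, if X s = X t then B / T else 0) :
    (∀ t, 1 ≤ t → t ≤ T →
      fp (X t) ∈ Set.Icc (-(c / (2 * (Bud t) ^ α))) (c / (2 * (Bud t) ^ α)) ∧
      fm (X t) ∈ Set.Icc (-(c / (2 * (Bud t) ^ α))) (c / (2 * (Bud t) ^ α))) ∧
    (∃ f ∈ ({fp, fm} : Set (ℝ → ℝ)),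
      c / (2 * B ^ α) ≤ f R - sInf (f '' Set.Icc lo hi) ∧
      (1 / 4) * (c / (∑ t ∈ Finset.Icc 1 T, (B / T)) ^ α) ≤ c / (2 * B ^ α)) := by
  have hK : 0 ≤ c / (2 * B ^ α) := by positivity
  obtain rfl : fp = fun x => ramp lo hi x * (c / (2 * B ^ α)) := funext hfp
  obtain rfl : fm = fun x => -ramp lo hi x * (c / (2 * B ^ α)) := funext hfm
  obtain rfl : Bud = budget B T X := funext hBud
  refine ⟨fun t ht htT => ?_, ?_⟩
  · have hradius := div_two_mul_rpow_le hα.le hc (budget_pos (X := X) hB ht htT)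
      (budget_le hB.le htT)
    have hplus := abs_ramp_mul_le hI (hX t ht htT) hK
    have hminus : |-ramp lo hi (X t) * (c / (2 * B ^ α))| ≤ c / (2 * B ^ α) := by
      rwa [neg_mul, abs_neg]
    exact ⟨abs_le.1 (hplus.trans hradius), abs_le.1 (hminus.trans hradius)⟩
  · obtain ⟨f, hf, herror⟩ := exists_ramp_le_sub_csInf R hI hK
    exact ⟨f, hf, herror, quarter_div_sum_rpow_le hα hc hB T⟩

/-- First case of the lower bound (Theorem 2): the fuzzy evaluations are identical for
`f₊` and `f₋`, hence some alternative has optimization error at least `c/(2B^α)`. -/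
theorem stmt19 (α c B : ℝ) (hα : 0 < α) (hc : 0 ≤ c) (hB : 0 < B)
    (T : ℕ) (hT : 1 ≤ T) (lo hi : ℝ) (hI : lo < hi)
    (X : ℕ → ℝ) (hX : ∀ t, 1 ≤ t → t ≤ T → X t ∈ Set.Icc lo hi)
    (R : ℝ) (hR : R ∈ Set.Icc lo hi)
    (fp fm : ℝ → ℝ)
    (hfp : ∀ x, fp x = (1 - 2 * (x - lo) / (hi - lo)) * (c / (2 * B ^ α)))
    (hfm : ∀ x, fm x = -(1 - 2 * (x - lo) / (hi - lo)) * (c / (2 * B ^ α)))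
    (Bud : ℕ → ℝ)
    (hBud : ∀ t, Bud t = ∑ s ∈ Finset.Icc 1 t, if X s = X t then B / T else 0) :
    (∀ t, 1 ≤ t → t ≤ T →
      fp (X t) ∈ Set.Icc (-(c / (2 * (Bud t) ^ α))) (c / (2 * (Bud t) ^ α)) ∧
      fm (X t) ∈ Set.Icc (-(c / (2 * (Bud t) ^ α))) (c / (2 * (Bud t) ^ α))) ∧
    (∃ f ∈ ({fp, fm} : Set (ℝ → ℝ)),
      c / (2 * B ^ α) ≤ f R - sInf (f '' Set.Icc lo hi) ∧
      (1 / 4) * (c / (∑ t ∈ Finset.Icc 1 T, (B / T)) ^ α) ≤ c / (2 * B ^ α)) :=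
  stmt19_general α c B hα hc hB T lo hi hI X hX R fp fm hfp hfm Bud hBud
end
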